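/- Let A ⊆ E be a subset of the even side of the hypercube Q_d centered so that A is an even Hamming ball around the all-zeros vertex contained in radius k+2 and containing radius k, with k ≤ d/4. Then |N(A)| - |A| ≥ |N(A)|/3. -/

import Mathlib

/-!
A vertex `a` of the cube has `d - wt a` upper neighbours (set one zero coordinate to one) and a
vertex `t` has `wt t` lower ones. Double counting upper-neighbour pairs between a set `A` in the
Hamming ball of radius `r` and its neighbourhood, which lies in the ball of radius `r + 1`, gives
`|A| (d - r) ≤ |N(A)| (r + 1)`. For `r = k + 2`, `4 k ≤ d` and `d ≥ 17` the ratio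
`(r + 1) / (d - r)` is at most `2 / 3`.
-/

/-- The `d`-dimensional hypercube graph. -/
def cubeGraph (d : ℕ) : SimpleGraph (Fin d → ZMod 2) where
  Adj x y := hammingDist x y = 1
  symm := ⟨by intro x y h; rwa [hammingDist_comm]⟩
  loopless := ⟨by intro x h; simp [hammingDist_self] at h⟩

/-- Hamming weight of a vertex of the cube. -/
def wt {d : ℕ} (v : Fin d → ZMod 2) : ℕ := hammingDist v 0

/-- The even bipartition class of the hypercube. -/
def evenSide (d : ℕ) : Set (Fin d → ZMod 2) := {v | ∑ i, v i = 0}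

/-- The neighbourhood of a set of vertices. -/
def nbhd {V : Type*} (G : SimpleGraph V) (A : Set V) : Set V := {y | ∃ a ∈ A, G.Adj a y}

open Finset Function

section Cube

variable {d : ℕ}

lemma wt_eq_card (v : Fin d → ZMod 2) : wt v = #{i | v i ≠ 0} :=
  hammingDist_zero_right v

lemma card_filter_eq_zero_eq_sub_wt (v : Fin d → ZMod 2) : #{i | v i = 0} = d - wt v := by
  have h := card_filter_add_card_filter_not (s := univ) (fun i => v i = 0)
  rw [card_univ, Fintype.card_fin] at h
  simp only [wt_eq_card, ne_eq]
  omega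

lemma cubeGraph_adj_update {v : Fin d → ZMod 2} {i : Fin d} {b : ZMod 2} (h : v i ≠ b) :
    (cubeGraph d).Adj v (update v i b) := by
  change hammingDist v (update v i b) = 1
  rw [hammingDist, card_eq_one]
  exact ⟨i, by ext j; by_cases hj : j = i <;> simp [hj, h]⟩

lemma wt_le_wt_add_one_of_adj {x y : Fin d → ZMod 2} (h : (cubeGraph d).Adj x y) :
    wt y ≤ wt x + 1 := by
  have h' : hammingDist y x = 1 := (cubeGraph d).adj_symm h
  have := hammingDist_triangle y x 0
  unfold wt
  omega

theorem card_mul_le_card_mul_of_update_mem {S T : Finset (Fin d → ZMod 2)} {w r : ℕ}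
    (hS : ∀ s ∈ S, wt s ≤ w) (hST : ∀ s ∈ S, ∀ i, s i = 0 → update s i 1 ∈ T)
    (hT : ∀ t ∈ T, wt t ≤ r) : #S * (d - w) ≤ #T * r := by
  refine card_mul_le_card_mul (fun s t => ∃ i, s i = 0 ∧ update s i 1 = t)
    (fun s hs => ?_) (fun t ht => ?_)
  · have hinj : Set.InjOn (fun i => update s i 1) {i | s i = 0} := by
      intro i hi j _ hij
      by_contra hne
      have := congrFun hij i
      simp_all
    calc d - w ≤ d - wt s := by have := hS s hs; omega
      _ = #{i | s i = 0} := (card_filter_eq_zero_eq_sub_wt s).symm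
      _ = #(({i | s i = 0} : Finset (Fin d)).image fun i => update s i 1) :=
        (card_image_of_injOn (by simpa using hinj)).symm
      _ ≤ _ := card_le_card fun t ht => by
        obtain ⟨i, hi, rfl⟩ := mem_image.1 ht
        exact (mem_bipartiteAbove _).2 ⟨hST s hs i (by simpa using hi), i, by simpa using hi, rfl⟩
  · calc #(S.bipartiteBelow _ t)
        ≤ #(({i | t i ≠ 0} : Finset (Fin d)).image fun i => update t i 0) :=
          card_le_card fun s hs => by
            obtain ⟨-, i, hi, rfl⟩ := (mem_bipartiteBelow _).1 hs
            exact mem_image.2 ⟨i, by simp, by simp [← hi]⟩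
      _ ≤ #{i | t i ≠ 0} := card_image_le
      _ = wt t := (wt_eq_card t).symm
      _ ≤ r := hT t ht

theorem ncard_mul_le_ncard_nbhd_mul {A : Set (Fin d → ZMod 2)} {r : ℕ}
    (hA : ∀ a ∈ A, wt a ≤ r) :
    A.ncard * (d - r) ≤ (nbhd (cubeGraph d) A).ncard * (r + 1) := by
  classical
  rw [Set.ncard_eq_toFinset_card' A, Set.ncard_eq_toFinset_card' (nbhd (cubeGraph d) A)]
  refine card_mul_le_card_mul_of_update_mem (by simpa using hA) (fun s hs i hi => ?_)
    (fun t ht => ?_)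
  · rw [Set.mem_toFinset] at hs ⊢
    exact ⟨s, hs, cubeGraph_adj_update (by simp [hi])⟩
  · obtain ⟨a, ha, hat⟩ := Set.mem_toFinset.1 ht
    have := hA a ha
    have := wt_le_wt_add_one_of_adj hat
    omega

end Cube

/-- for large `d`, if `A` is an even Hamming ball about the all-zeros
vertex containing radius `k` and contained in radius `k + 2`, with `k` even and
`k ≤ d/4`, then `|N(A)| - |A| ≥ |N(A)|/3`. -/
theorem even_hamming_ball_expansion :
    ∃ d₀ : ℕ, ∀ d ≥ d₀, ∀ k : ℕ, Even k → 4 * k ≤ d →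
      ∀ A : Set (Fin d → ZMod 2),
        {v ∈ evenSide d | wt v ≤ k} ⊆ A → A ⊆ {v ∈ evenSide d | wt v ≤ k + 2} →
        ((nbhd (cubeGraph d) A).ncard : ℝ) - A.ncard ≥ (nbhd (cubeGraph d) A).ncard / 3 := by
  refine ⟨17, fun d hd k _ hkd A _ hA => ?_⟩
  have hcount := ncard_mul_le_ncard_nbhd_mul fun a ha => (hA ha).2
  obtain ⟨m, hm⟩ : ∃ m, d - (k + 2) = m := ⟨_, rfl⟩
  have hratio : 3 * (k + 3) ≤ 2 * m := by omega
  have hm0 : 0 < m := by omega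
  rw [hm] at hcount
  have hNat : 3 * A.ncard ≤ 2 * (nbhd (cubeGraph d) A).ncard := by
    refine Nat.le_of_mul_le_mul_right ?_ hm0
    nlinarith
  have hReal : (3 : ℝ) * A.ncard ≤ 2 * (nbhd (cubeGraph d) A).ncard := by exact_mod_cast hNat
  linarith
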